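/- arXiv:2305.14168 — 2 statements merged into one kernel-verified Lean document; each statement's English description precedes it below -/
import Mathlib

section
/- Let G : Matrix (Fin t) (Fin n) (ZMod 2) and, for j ∈ Fin k, let B_{0j}, B_{1j} : Matrix (Fin t) (Fin m) (ZMod 2) be such that every system G * X = B_{ij} is consistent; write S_{ij} := {X : G * X = B_{ij}} (finite sets) and let S_i be the multiset sum Σ_{j} S_{ij} for i = 0, 1. For every F ⊆ Fin n, the multisets {X[F] : X ∈ S_0} and {X[F] : X ∈ S_1} (counted with multiplicity) are equal if and only if there exists a bijection f : Fin k ≃ Fin k such that for every j ∈ Fin k there exist X0 ∈ S_{0j} and X1 ∈ S_{1, f(j)} with X0[F] = X1[F]. -/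
open scoped Classical

noncomputable section

/-- Hamming weight of a vector over `ZMod 2`. -/
def wt {m : ℕ} (v : Fin m → ZMod 2) : ℕ :=
  (Finset.univ.filter fun j => v j = 1).card

/-- `⊕M[Q]` : XOR (sum over `ZMod 2`) of the rows of `M` with index in `Q`. -/
def xorRows {n m : ℕ} (M : Matrix (Fin n) (Fin m) (ZMod 2)) (Q : Finset (Fin n)) :
    Fin m → ZMod 2 :=
  fun j => ∑ i ∈ Q, M i j

/-- `M[F]` : restriction of `M` to the rows with index in `F`. -/
def rowRestrict {n m : ℕ} (F : Finset (Fin n)) (M : Matrix (Fin n) (Fin m) (ZMod 2)) :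
    {x // x ∈ F} → Fin m → ZMod 2 :=
  fun i j => M i.1 j

/-- An access structure: a nonempty family of nonempty subsets of `Fin n`. -/
def IsAccessStructure {n : ℕ} (ΓQual : Finset (Finset (Fin n))) : Prop :=
  ΓQual.Nonempty ∧ ∀ Q ∈ ΓQual, Q.Nonempty

/-- `Γ⁻` : minimal elements of `ΓQual` under inclusion. -/
def minQual {n : ℕ} (ΓQual : Finset (Finset (Fin n))) : Finset (Finset (Fin n)) :=
  ΓQual.filter fun Q => ∀ Q' ∈ ΓQual, Q' ⊆ Q → Q' = Q

/-- `Γ_Forb` : sets containing no minimal qualified set. -/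
def Forb {n : ℕ} (ΓQual : Finset (Finset (Fin n))) (F : Finset (Fin n)) : Prop :=
  ∀ Q ∈ minQual ΓQual, ¬ Q ⊆ F

/-- XVCS: contrast + security (same matrices with same frequencies, after
normalizing by the cardinalities). -/
def XVCS {n m : ℕ} (ΓQual : Finset (Finset (Fin n)))
    (C0 C1 : Multiset (Matrix (Fin n) (Fin m) (ZMod 2))) : Prop :=
  C0 ≠ 0 ∧ C1 ≠ 0 ∧
  (∀ Q ∈ ΓQual, ∀ M0 ∈ C0, ∀ M1 ∈ C1, wt (xorRows M0 Q) < wt (xorRows M1 Q)) ∧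
  ∀ F : Finset (Fin n), Forb ΓQual F →
    ∀ D : {x // x ∈ F} → Fin m → ZMod 2,
      Multiset.card C1 * (C0.map (rowRestrict F)).count D
        = Multiset.card C0 * (C1.map (rowRestrict F)).count D

/-- Static contrast condition of an SXVCS. -/
def StaticContrast {n m : ℕ} (ΓQual : Finset (Finset (Fin n)))
    (C0 C1 : Multiset (Matrix (Fin n) (Fin m) (ZMod 2))) : Prop :=
  ∀ Q ∈ ΓQual, ∃ E0 E1 : Fin m → ZMod 2,
    (∀ M ∈ C0, xorRows M Q = E0) ∧ (∀ M ∈ C1, xorRows M Q = E1) ∧ wt E0 < wt E1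

/-- SXVCS : an XVCS satisfying the static contrast condition. -/
def SXVCS {n m : ℕ} (ΓQual : Finset (Finset (Fin n)))
    (C0 C1 : Multiset (Matrix (Fin n) (Fin m) (ZMod 2))) : Prop :=
  XVCS ΓQual C0 C1 ∧ StaticContrast ΓQual C0 C1

/-- Perfect white pixel reconstruction. -/
def PerfectWhite {n m : ℕ} (ΓQual : Finset (Finset (Fin n)))
    (C0 : Multiset (Matrix (Fin n) (Fin m) (ZMod 2))) : Prop :=
  ∀ Q ∈ ΓQual, ∀ M ∈ C0, xorRows M Q = 0

/-- Average contrast of a scheme. -/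
def avgContrast {n m : ℕ} (ΓQual : Finset (Finset (Fin n)))
    (C0 C1 : Multiset (Matrix (Fin n) (Fin m) (ZMod 2))) : ℚ :=
  (∑ Q ∈ ΓQual,
      ((C1.map fun M => (wt (xorRows M Q) : ℚ)).sum / (Multiset.card C1 : ℚ)
        - (C0.map fun M => (wt (xorRows M Q) : ℚ)).sum / (Multiset.card C0 : ℚ)) / (m : ℚ))
    / (ΓQual.card : ℚ)

/-- PXVCS : probabilistic contrast condition + security. -/
def PXVCS {n m : ℕ} (ΓQual : Finset (Finset (Fin n)))
    (C0 C1 : Multiset (Matrix (Fin n) (Fin m) (ZMod 2))) : Prop :=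
  C0 ≠ 0 ∧ C1 ≠ 0 ∧
  (∀ Q ∈ ΓQual,
    (C0.map fun M => (wt (xorRows M Q) : ℚ)).sum / (Multiset.card C0 : ℚ)
      < (C1.map fun M => (wt (xorRows M Q) : ℚ)).sum / (Multiset.card C1 : ℚ)) ∧
  ∀ F : Finset (Fin n), Forb ΓQual F →
    ∀ D : {x // x ∈ F} → Fin m → ZMod 2,
      Multiset.card C1 * (C0.map (rowRestrict F)).count D
        = Multiset.card C0 * (C1.map (rowRestrict F)).count D

/-- Qualified matrix of an enumeration `Q : Fin t → Finset (Fin n)` of `ΓQual`. -/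
def qualMatrix {t n : ℕ} (Q : Fin t → Finset (Fin n)) : Matrix (Fin t) (Fin n) (ZMod 2) :=
  fun k i => if i ∈ Q k then 1 else 0

/-- Solution set of `G * X = B` as a multiset (each solution once). -/
def solMS {t n m : ℕ} (G : Matrix (Fin t) (Fin n) (ZMod 2))
    (B : Matrix (Fin t) (Fin m) (ZMod 2)) : Multiset (Matrix (Fin n) (Fin m) (ZMod 2)) :=
  (Finset.univ.filter fun X : Matrix (Fin n) (Fin m) (ZMod 2) => G * X = B).val

/-- Symmetric difference of a family: points in an odd number of members. -/
def symmDiffFam {n : ℕ} (S : Finset (Finset (Fin n))) : Finset (Fin n) :=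
  Finset.univ.filter fun i => Odd (S.filter fun A => i ∈ A).card

/-- The `(k,n)` threshold qualified family. -/
def qualK (n k : ℕ) : Finset (Finset (Fin n)) :=
  Finset.univ.filter fun Q : Finset (Fin n) => Q.card = k

section helpers
variable {t n m : ℕ} (G : Matrix (Fin t) (Fin n) (ZMod 2)) (F : Finset (Fin n))

lemma madd_self (A : Matrix (Fin n) (Fin m) (ZMod 2)) : A + A = 0 := by
  ext i j; simp [Matrix.add_apply, ← two_mul]; left; decide

lemma fadd_self {α β : Type*} (v : α → β → ZMod 2) : v + v = 0 := by
  funext i j; simp [← two_mul]; left; decide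

lemma rr_add (X Y : Matrix (Fin n) (Fin m) (ZMod 2)) :
    rowRestrict F (X + Y) = rowRestrict F X + rowRestrict F Y := rfl

lemma mem_solMS {B : Matrix (Fin t) (Fin m) (ZMod 2)} {X : Matrix (Fin n) (Fin m) (ZMod 2)} :
    X ∈ solMS G B ↔ G * X = B := by
  simp [solMS]

lemma count_sol (B : Matrix (Fin t) (Fin m) (ZMod 2)) (D : {x // x ∈ F} → Fin m → ZMod 2) :
    Multiset.count D ((solMS G B).map (rowRestrict F))
      = (Finset.univ.filter fun X => G * X = B ∧ rowRestrict F X = D).card := by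
  rw [solMS, Multiset.count_map, ← Finset.filter_val, Finset.filter_filter, ← Finset.card_def]
  apply Finset.card_bij (fun X _ => X) <;> intro X <;>
    simp only [Finset.mem_filter, Finset.mem_univ, true_and]
  · exact fun h => ⟨h.1, h.2.symm⟩
  · exact fun _ _ _ h => h
  · exact fun h => ⟨X, ⟨h.1, h.2.symm⟩, rfl⟩

lemma mem_sol_map {B : Matrix (Fin t) (Fin m) (ZMod 2)} {D : {x // x ∈ F} → Fin m → ZMod 2} :
    D ∈ (solMS G B).map (rowRestrict F) ↔ ∃ X, G * X = B ∧ rowRestrict F X = D := by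
  simp [Multiset.mem_map, mem_solMS]

lemma key {B B' : Matrix (Fin t) (Fin m) (ZMod 2)} {X0 X1 : Matrix (Fin n) (Fin m) (ZMod 2)}
    (hX0 : G * X0 = B) (hX1 : G * X1 = B') (hr : rowRestrict F X0 = rowRestrict F X1) :
    (solMS G B).map (rowRestrict F) = (solMS G B').map (rowRestrict F) := by
  ext D
  rw [count_sol, count_sol]
  apply Finset.card_bij' (fun X _ => X + (X0 + X1)) (fun X _ => X + (X0 + X1))
  · intro X hX
    simp only [Finset.mem_filter, Finset.mem_univ, true_and] at hX ⊢
    refine ⟨?_, ?_⟩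
    · rw [Matrix.mul_add, Matrix.mul_add, hX.1, hX0, hX1, ← add_assoc, madd_self, zero_add]
    · rw [rr_add, rr_add, hr, fadd_self, add_zero, hX.2]
  · intro X hX
    simp only [Finset.mem_filter, Finset.mem_univ, true_and] at hX ⊢
    refine ⟨?_, ?_⟩
    · rw [Matrix.mul_add, Matrix.mul_add, hX.1, hX0, hX1, add_comm B B', ← add_assoc,
        madd_self, zero_add]
    · rw [rr_add, rr_add, hr, fadd_self, add_zero, hX.2]
  · intro X _; rw [add_assoc, madd_self, add_zero]
  · intro X _; rw [add_assoc, madd_self, add_zero]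

lemma count_sol_const {B : Matrix (Fin t) (Fin m) (ZMod 2)} {D : {x // x ∈ F} → Fin m → ZMod 2}
    (h : ∃ X, G * X = B ∧ rowRestrict F X = D) :
    Multiset.count D ((solMS G B).map (rowRestrict F))
      = (Finset.univ.filter fun Y : Matrix (Fin n) (Fin m) (ZMod 2) =>
          G * Y = 0 ∧ rowRestrict F Y = 0).card := by
  obtain ⟨X0, hX0, hr0⟩ := h
  rw [count_sol]
  apply Finset.card_bij' (fun X _ => X + X0) (fun X _ => X + X0)
  · intro X hX
    simp only [Finset.mem_filter, Finset.mem_univ, true_and] at hX ⊢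
    refine ⟨?_, ?_⟩
    · rw [Matrix.mul_add, hX.1, hX0, madd_self]
    · rw [rr_add, hX.2, hr0, fadd_self]
  · intro X hX
    simp only [Finset.mem_filter, Finset.mem_univ, true_and] at hX ⊢
    refine ⟨?_, ?_⟩
    · rw [Matrix.mul_add, hX.1, hX0, zero_add]
    · rw [rr_add, hX.2, hr0, zero_add]
  · intro X _; rw [add_assoc, madd_self, add_zero]
  · intro X _; rw [add_assoc, madd_self, add_zero]

end helpers

/-- security criterion for `2k` linear systems via a bijection
between the systems. -/
theorem stmt5 {t n m k : ℕ} (G : Matrix (Fin t) (Fin n) (ZMod 2))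
    (B0 B1 : Fin k → Matrix (Fin t) (Fin m) (ZMod 2))
    (h0 : ∀ j, ∃ X : Matrix (Fin n) (Fin m) (ZMod 2), G * X = B0 j)
    (h1 : ∀ j, ∃ X : Matrix (Fin n) (Fin m) (ZMod 2), G * X = B1 j)
    (F : Finset (Fin n)) :
    (∑ j : Fin k, solMS G (B0 j)).map (rowRestrict F)
        = (∑ j : Fin k, solMS G (B1 j)).map (rowRestrict F) ↔
      ∃ f : Fin k ≃ Fin k, ∀ j : Fin k,
        ∃ X0 ∈ solMS G (B0 j), ∃ X1 ∈ solMS G (B1 (f j)),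
          rowRestrict F X0 = rowRestrict F X1 := by
  set R0 : Fin k → Multiset ({x // x ∈ F} → Fin m → ZMod 2) :=
    fun j => (solMS G (B0 j)).map (rowRestrict F) with hR0def
  set R1 : Fin k → Multiset ({x // x ∈ F} → Fin m → ZMod 2) :=
    fun j => (solMS G (B1 j)).map (rowRestrict F) with hR1def
  have hmap : ∀ (B : Fin k → Matrix (Fin t) (Fin m) (ZMod 2)),
      (∑ j : Fin k, solMS G (B j)).map (rowRestrict F)
        = ∑ j : Fin k, (solMS G (B j)).map (rowRestrict F) :=
    fun B => map_sum (Multiset.mapAddMonoidHom (rowRestrict F)) _ _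
  rw [hmap, hmap]
  constructor
  · intro hsum
    -- the common multiplicity
    set c := (Finset.univ.filter fun Y : Matrix (Fin n) (Fin m) (ZMod 2) =>
        G * Y = 0 ∧ rowRestrict F Y = 0).card with hc_def
    have hc : 0 < c := by
      apply Finset.card_pos.mpr
      refine ⟨0, ?_⟩
      simp only [Finset.mem_filter, Finset.mem_univ, true_and]
      exact ⟨Matrix.mul_zero G, rfl⟩
    -- sums of counts
    have hcnt : ∀ (B : Fin k → Matrix (Fin t) (Fin m) (ZMod 2))
        (D : {x // x ∈ F} → Fin m → ZMod 2),
        ∑ j : Fin k, Multiset.count D ((solMS G (B j)).map (rowRestrict F))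
          = (Finset.univ.filter fun j => D ∈ (solMS G (B j)).map (rowRestrict F)).card * c := by
      intro B D
      have : ∀ j : Fin k, Multiset.count D ((solMS G (B j)).map (rowRestrict F))
          = if D ∈ (solMS G (B j)).map (rowRestrict F) then c else 0 := by
        intro j
        split_ifs with h
        · exact count_sol_const G F ((mem_sol_map G F).mp h)
        · exact Multiset.count_eq_zero.mpr h
      rw [Finset.sum_congr rfl fun j _ => this j, ← Finset.sum_filter,
        Finset.sum_const, smul_eq_mul]
    have hfib : ∀ T, (Finset.univ.filter fun j => R0 j = T).card
        = (Finset.univ.filter fun j => R1 j = T).card := by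
      intro T
      by_cases hT : (∃ j, R0 j = T) ∨ (∃ j, R1 j = T)
      · have hTne : ∃ D, D ∈ T := by
          rcases hT with ⟨j, hj⟩ | ⟨j, hj⟩
          · obtain ⟨X, hX⟩ := h0 j
            exact ⟨rowRestrict F X, hj ▸ (mem_sol_map G F).mpr ⟨X, hX, rfl⟩⟩
          · obtain ⟨X, hX⟩ := h1 j
            exact ⟨rowRestrict F X, hj ▸ (mem_sol_map G F).mpr ⟨X, hX, rfl⟩⟩
        obtain ⟨D, hD⟩ := hTne
        have hDT : ∀ (B' : Matrix (Fin t) (Fin m) (ZMod 2)),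
            D ∈ (solMS G B').map (rowRestrict F) →
            (solMS G B').map (rowRestrict F) = T := by
          intro B' hB'
          obtain ⟨X, hX, hrX⟩ := (mem_sol_map G F).mp hB'
          rcases hT with ⟨j', hj'⟩ | ⟨j', hj'⟩ <;> rw [← hj'] at hD ⊢
          · obtain ⟨X', hX', hrX'⟩ := (mem_sol_map G F).mp hD
            exact key G F hX hX' (by rw [hrX, hrX'])
          · obtain ⟨X', hX', hrX'⟩ := (mem_sol_map G F).mp hD
            exact key G F hX hX' (by rw [hrX, hrX'])
        have e0 : ∀ j, (R0 j = T ↔ D ∈ R0 j) := by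
          intro j
          exact ⟨fun h => h ▸ hD, fun h => hDT _ h⟩
        have e1 : ∀ j, (R1 j = T ↔ D ∈ R1 j) := by
          intro j
          exact ⟨fun h => h ▸ hD, fun h => hDT _ h⟩
        have hcD := congrArg (Multiset.count D) hsum
        rw [Multiset.count_sum', Multiset.count_sum', hcnt B0 D, hcnt B1 D] at hcD
        have := Nat.eq_of_mul_eq_mul_right hc hcD
        calc (Finset.univ.filter fun j => R0 j = T).card
            = (Finset.univ.filter fun j => D ∈ R0 j).card := by
              congr 1; apply Finset.filter_congr; intro j _; exact e0 j
          _ = (Finset.univ.filter fun j => D ∈ R1 j).card := this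
          _ = (Finset.univ.filter fun j => R1 j = T).card := by
              congr 1; apply Finset.filter_congr; intro j _; exact (e1 j).symm
      · push_neg at hT
        rw [Finset.filter_eq_empty_iff.mpr fun j _ => hT.1 j,
          Finset.filter_eq_empty_iff.mpr fun j _ => hT.2 j]
    have fibequiv : ∀ T, {j // R0 j = T} ≃ {j // R1 j = T} := fun T =>
      Fintype.equivOfCardEq (by rw [Fintype.card_subtype, Fintype.card_subtype, hfib])
    refine ⟨Equiv.ofFiberEquiv fibequiv, fun j => ?_⟩
    have hfj : R1 ((Equiv.ofFiberEquiv fibequiv) j) = R0 j :=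
      Equiv.ofFiberEquiv_map fibequiv j
    obtain ⟨X0, hX0⟩ := h0 j
    have hD0 : rowRestrict F X0 ∈ R0 j := (mem_sol_map G F).mpr ⟨X0, hX0, rfl⟩
    have hD1 : rowRestrict F X0 ∈ R1 ((Equiv.ofFiberEquiv fibequiv) j) := hfj ▸ hD0
    obtain ⟨X1, hX1, hrX1⟩ := (mem_sol_map G F).mp hD1
    exact ⟨X0, (mem_solMS G).mpr hX0, X1, (mem_solMS G).mpr hX1, hrX1.symm⟩
  · rintro ⟨f, hf⟩
    have hEq : ∀ j, R0 j = R1 (f j) := by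
      intro j
      obtain ⟨X0, hX0, X1, hX1, hr⟩ := hf j
      exact key G F ((mem_solMS G).mp hX0) ((mem_solMS G).mp hX1) hr
    calc ∑ j : Fin k, R0 j = ∑ j : Fin k, R1 (f j) := Finset.sum_congr rfl fun j _ => hEq j
      _ = ∑ j : Fin k, R1 j := Equiv.sum_comp f R1
end
end

section
/- Let (Γ_Qual, Γ_Forb) be an access structure on Fin n. There exists an SXVCS for (Γ_Qual, Γ_Forb) (for some pixel expansion m) if and only if there exists an XVCS for (Γ_Qual, Γ_Forb) with perfect white pixel reconstruction (for some pixel expansion m'). -/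
open scoped Classical

noncomputable section

/-! ### Auxiliary lemmas for `stmt10` -/

private lemma zmod2_all_add_self : ∀ a : ZMod 2, a + a = 0 := by decide

private lemma zmod2_all_ne_zero : ∀ a : ZMod 2, a ≠ 0 → a = 1 := by decide

private lemma vec_add_self {m : ℕ} (v : Fin m → ZMod 2) : v + v = 0 := by
  funext j; exact zmod2_all_add_self (v j)

private lemma pi2_add_self {ι κ : Type*} (v : ι → κ → ZMod 2) : v + v = 0 := by
  funext i j; exact zmod2_all_add_self (v i j)

private lemma mat_add_self {n m : ℕ} (M : Matrix (Fin n) (Fin m) (ZMod 2)) : M + M = 0 := by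
  funext i j
  simp only [Matrix.add_apply, Matrix.zero_apply]
  exact zmod2_all_add_self (M i j)

private lemma wt_zero {m : ℕ} : wt (0 : Fin m → ZMod 2) = 0 := by
  simp [wt]

private lemma wt_pos {m : ℕ} {v : Fin m → ZMod 2} (h : v ≠ 0) : 0 < wt v := by
  obtain ⟨j, hj⟩ := Function.ne_iff.mp h
  have h1 : v j = 1 := zmod2_all_ne_zero (v j) (by simpa using hj)
  rw [wt, Finset.card_pos]
  exact ⟨j, Finset.mem_filter.mpr ⟨Finset.mem_univ _, h1⟩⟩

private lemma xorRows_add {n m : ℕ} (M N : Matrix (Fin n) (Fin m) (ZMod 2))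
    (Q : Finset (Fin n)) : xorRows (M + N) Q = xorRows M Q + xorRows N Q := by
  funext j
  simp [xorRows, Matrix.add_apply, Finset.sum_add_distrib]

private lemma rowRestrict_add {n m : ℕ} (F : Finset (Fin n))
    (M N : Matrix (Fin n) (Fin m) (ZMod 2)) :
    rowRestrict F (M + N) = rowRestrict F M + rowRestrict F N := by
  funext i j
  simp [rowRestrict, Matrix.add_apply]

private lemma count_map_add_right {n m : ℕ} {F : Finset (Fin n)}
    (S : Multiset ({x // x ∈ F} → Fin m → ZMod 2))
    (c D : {x // x ∈ F} → Fin m → ZMod 2) :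
    (S.map (fun v => v + c)).count D = S.count (D + c) := by
  have h := Multiset.count_map_eq_count' (fun v => v + c) S (add_left_injective c) (D + c)
  have h2 : D + c + c = D := by rw [add_assoc, pi2_add_self c, add_zero]
  rw [h2] at h
  exact h

/-- SXVCS exists iff an XVCS with perfect white pixel
reconstruction exists. -/
theorem stmt10 {n : ℕ} (ΓQual : Finset (Finset (Fin n)))
    (hA : IsAccessStructure ΓQual) :
    (∃ (m : ℕ) (C0 C1 : Multiset (Matrix (Fin n) (Fin m) (ZMod 2))),
        SXVCS ΓQual C0 C1) ↔
      ∃ (m' : ℕ) (C0 C1 : Multiset (Matrix (Fin n) (Fin m') (ZMod 2))),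
        XVCS ΓQual C0 C1 ∧ PerfectWhite ΓQual C0 := by
  constructor
  · rintro ⟨m, C0, C1, ⟨⟨h0, h1, hcon, hsec⟩, hstat⟩⟩
    obtain ⟨Mstar, hMstar⟩ := Multiset.exists_mem_of_ne_zero h0
    have hcomp : ∀ (F : Finset (Fin n)) (C : Multiset (Matrix (Fin n) (Fin m) (ZMod 2))),
        (C.map (fun M => M + Mstar)).map (rowRestrict F)
          = (C.map (rowRestrict F)).map (fun v => v + rowRestrict F Mstar) := by
      intro F C
      rw [Multiset.map_map, Multiset.map_map]
      apply Multiset.map_congr rfl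
      intro M _
      simp [Function.comp, rowRestrict_add]
    refine ⟨m, C0.map (fun M => M + Mstar), C1.map (fun M => M + Mstar),
      ⟨?_, ?_, ?_, ?_⟩, ?_⟩
    · simpa using h0
    · simpa using h1
    · intro Q hQ M0' hM0' M1' hM1'
      obtain ⟨M0, hM0, rfl⟩ := Multiset.mem_map.mp hM0'
      obtain ⟨M1, hM1, rfl⟩ := Multiset.mem_map.mp hM1'
      obtain ⟨E0, E1, hE0, hE1, hw⟩ := hstat Q hQ
      have hz : xorRows (M0 + Mstar) Q = 0 := by
        rw [xorRows_add, hE0 _ hM0, hE0 _ hMstar]; exact vec_add_self E0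
      have hx : xorRows (M1 + Mstar) Q = E1 + E0 := by
        rw [xorRows_add, hE1 _ hM1, hE0 _ hMstar]
      rw [hz, hx, wt_zero]
      apply wt_pos
      intro hc
      have : E1 = E0 := by
        have h3 := congrArg (fun w => w + E0) hc
        simpa [add_assoc, vec_add_self E0] using h3
      rw [this] at hw
      exact absurd hw (lt_irrefl _)
    · intro F hF D
      rw [hcomp F C0, hcomp F C1, count_map_add_right, count_map_add_right]
      simpa using hsec F hF (D + rowRestrict F Mstar)
    · intro Q hQ M0' hM0'
      obtain ⟨M0, hM0, rfl⟩ := Multiset.mem_map.mp hM0'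
      obtain ⟨E0, E1, hE0, hE1, hw⟩ := hstat Q hQ
      rw [xorRows_add, hE0 _ hM0, hE0 _ hMstar]
      exact vec_add_self E0
  · rintro ⟨m, C0, C1, ⟨h0, h1, hcon, hsec⟩, hpw⟩
    obtain ⟨B, hB⟩ := Multiset.exists_mem_of_ne_zero h1
    obtain ⟨A0, hA0⟩ := Multiset.exists_mem_of_ne_zero h0
    set K : Finset (Matrix (Fin n) (Fin m) (ZMod 2)) :=
      Finset.univ.filter (fun X => ∀ Q ∈ ΓQual, xorRows X Q = 0) with hK
    have hmemK : ∀ X, X ∈ K ↔ ∀ Q ∈ ΓQual, xorRows X Q = 0 := by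
      intro X; simp [hK]
    have hA0K : A0 ∈ K := (hmemK _).mpr (fun Q hQ => hpw Q hQ A0 hA0)
    have hKadd : ∀ X Y, X ∈ K → Y ∈ K → X + Y ∈ K := by
      intro X Y hX hY
      refine (hmemK _).mpr (fun Q hQ => ?_)
      rw [xorRows_add, (hmemK X).mp hX Q hQ, (hmemK Y).mp hY Q hQ, add_zero]
    refine ⟨m, K.val, K.val.map (fun X => B + X), ⟨?_, ?_, ?_, ?_⟩, ?_⟩
    · intro hc
      have hmem : A0 ∈ K.val := Finset.mem_val.mpr hA0K
      rw [hc] at hmem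
      exact Multiset.notMem_zero _ hmem
    · intro hc
      rw [Multiset.map_eq_zero] at hc
      have hmem : A0 ∈ K.val := Finset.mem_val.mpr hA0K
      rw [hc] at hmem
      exact Multiset.notMem_zero _ hmem
    · intro Q hQ M0 hM0 M1 hM1
      have hz : xorRows M0 Q = 0 := (hmemK M0).mp (Finset.mem_val.mp hM0) Q hQ
      obtain ⟨X, hX, rfl⟩ := Multiset.mem_map.mp hM1
      have hx : xorRows (B + X) Q = xorRows B Q := by
        rw [xorRows_add, (hmemK X).mp (Finset.mem_val.mp hX) Q hQ, add_zero]
      rw [hz, hx, wt_zero]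
      exact lt_of_le_of_lt (Nat.zero_le _) (hcon Q hQ A0 hA0 B hB)
    · intro F hF D
      -- find M0 ∈ C0 with the same restriction to F as B
      have hcount1 : (C1.map (rowRestrict F)).count (rowRestrict F B) ≠ 0 :=
        Nat.pos_iff_ne_zero.mp (Multiset.count_pos.mpr
          (Multiset.mem_map_of_mem (rowRestrict F) hB))
      have hc0pos : Multiset.card C0 ≠ 0 := by
        simpa using h0
      have hcount0 : (C0.map (rowRestrict F)).count (rowRestrict F B) ≠ 0 := by
        intro hc
        have h4 := hsec F hF (rowRestrict F B)
        rw [hc, Nat.mul_zero] at h4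
        exact Nat.mul_ne_zero hc0pos hcount1 h4.symm
      obtain ⟨M0, hM0C, hM0F⟩ := Multiset.mem_map.mp
        (Multiset.count_pos.mp (Nat.pos_of_ne_zero hcount0))
      have hM0K : M0 ∈ K := (hmemK _).mpr (fun Q hQ => hpw Q hQ M0 hM0C)
      simp only [Multiset.card_map]
      congr 1
      rw [Multiset.map_map, Multiset.count_map, Multiset.count_map]
      show (K.filter (fun X => D = rowRestrict F X)).card
        = (K.filter (fun X => D = rowRestrict F (B + X))).card
      have hresBM : rowRestrict F M0 = rowRestrict F B := hM0F
      apply Finset.card_bij' (fun X _ => X + M0) (fun Y _ => Y + M0)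
      · intro X hX
        obtain ⟨hXK, hXD⟩ := Finset.mem_filter.mp hX
        refine Finset.mem_filter.mpr ⟨hKadd _ _ hXK hM0K, ?_⟩
        rw [rowRestrict_add, rowRestrict_add, hresBM, add_comm (rowRestrict F X),
          ← add_assoc, pi2_add_self, zero_add]
        exact hXD
      · intro Y hY
        obtain ⟨hYK, hYD⟩ := Finset.mem_filter.mp hY
        refine Finset.mem_filter.mpr ⟨hKadd _ _ hYK hM0K, ?_⟩
        rw [rowRestrict_add, hresBM]
        rw [rowRestrict_add] at hYD
        rw [hYD, add_comm]
      · intro X _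
        rw [add_assoc, mat_add_self, add_zero]
      · intro Y _
        rw [add_assoc, mat_add_self, add_zero]
    · intro Q hQ
      refine ⟨0, xorRows B Q, ?_, ?_, ?_⟩
      · intro M hM
        exact (hmemK M).mp (Finset.mem_val.mp hM) Q hQ
      · intro M hM
        obtain ⟨X, hX, rfl⟩ := Multiset.mem_map.mp hM
        rw [xorRows_add, (hmemK X).mp (Finset.mem_val.mp hX) Q hQ, add_zero]
      · rw [wt_zero]
        exact lt_of_le_of_lt (Nat.zero_le _) (hcon Q hQ A0 hA0 B hB)
end
end
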